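/- Let p ≥ 2 and let G be a group such that there is an injective homomorphism φ₁ : G ≀ (ℤ/p) → G, where G ≀ (ℤ/p) = (ZMod p → G) ⋊ ZMod p with ZMod p acting by translation. Then for every n ≥ 1 there is an injective homomorphism G ≀ (ℤ/pⁿ) → G. -/

import Mathlib

/-- The translation automorphism `f ↦ (y ↦ f (y + c))` of the pointwise group `C → G`. -/
def shiftEquiv (G : Type) [Group G] {C : Type} [AddCommGroup C] (c : C) :
    (C → G) ≃* (C → G) where
  toFun f := fun y => f (y + c)
  invFun f := fun y => f (y - c)
  left_inv f := by funext y; simp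
  right_inv f := by funext y; simp
  map_mul' f g := rfl

/-- The action of `C` on `C → G` by translation of the argument. -/
def shiftHom (G : Type) [Group G] (C : Type) [AddCommGroup C] :
    Multiplicative C →* MulAut (C → G) where
  toFun c := shiftEquiv G c.toAdd
  map_one' := by
    ext f y
    simp [shiftEquiv]
  map_mul' a b := by
    ext f y
    simp [shiftEquiv, add_assoc]

/-- The regular wreath product `G ≀ C` for an additive group `C`, realized as the
semidirect product `(C → G) ⋊ C` where `C` translates the argument; the multiplication
is `(f₁, h₁)(f₂, h₂) = (y ↦ f₁ y * f₂ (y + h₁), h₁ + h₂)`. -/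
def Wr (G : Type) [Group G] (C : Type) [AddCommGroup C] : Type :=
  SemidirectProduct (C → G) (Multiplicative C) (shiftHom G C)

instance (G : Type) [Group G] (C : Type) [AddCommGroup C] : Group (Wr G C) :=
  inferInstanceAs (Group (SemidirectProduct (C → G) (Multiplicative C) (shiftHom G C)))

/-!
Write `ℤ/pⁿ⁺¹` in base `p` as `ℤ/p × ℤ/pⁿ`, `x = a + p b`. Translation by `c` permutes the blocks
`{a + p b | b}` like the translation by `c mod p` of `ℤ/p`, and acts on each block as a translation
of `ℤ/pⁿ` by the carry `(a + c) / p`. This gives the Kaloujnine–Krasner embedding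
`G ≀ ℤ/pⁿ⁺¹ ↪ (G ≀ ℤ/pⁿ) ≀ ℤ/p`; applying the embedding `G ≀ ℤ/pⁿ ↪ G` from the induction
coordinatewise and then `φ₁` embeds `G ≀ ℤ/pⁿ⁺¹` into `G`.
-/

namespace Wr

variable {G H C : Type} [Group G] [Group H] [AddCommGroup C]

def mk (f : C → G) (c : C) : Wr G C :=
  SemidirectProduct.mk f (Multiplicative.ofAdd c)

lemma mk_mul (f₁ f₂ : C → G) (c₁ c₂ : C) :
    mk f₁ c₁ * mk f₂ c₂ = mk (fun y => f₁ y * f₂ (y + c₁)) (c₁ + c₂) := rfl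

lemma mk_inj {f₁ f₂ : C → G} {c₁ c₂ : C} : mk f₁ c₁ = mk f₂ c₂ ↔ f₁ = f₂ ∧ c₁ = c₂ :=
  ⟨fun h => by cases h; exact ⟨rfl, rfl⟩, fun ⟨hf, hc⟩ => hf ▸ hc ▸ rfl⟩

def map (ψ : H →* G) (C : Type) [AddCommGroup C] : Wr H C →* Wr G C :=
  SemidirectProduct.map (ψ.compLeft C) (MonoidHom.id _) fun _ => rfl

lemma map_injective {ψ : H →* G} (hψ : Function.Injective ψ) :
    Function.Injective (map ψ C) := fun _ _ hxy =>
  SemidirectProduct.ext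
    (funext fun c => hψ (congrFun (congrArg (fun z : Wr G C => z.left) hxy) c))
    (congrArg (fun z : Wr G C => z.right) hxy)

end Wr

/-- A decomposition of `C` into blocks `equiv (a, ·)`, each a copy of `B`, that translations
permute: translation by `c` moves block `a` to block `a + blockShift c`, acting on it as
translation by `innerShift c a`. -/
structure BlockDecomposition (A B C : Type) [AddCommGroup A] [AddCommGroup B]
    [AddCommGroup C] where
  equiv : A × B ≃ C
  blockShift : C → A
  innerShift : C → A → B
  equiv_add (a : A) (b : B) (c : C) :
    equiv (a, b) + c = equiv (a + blockShift c, b + innerShift c a)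

namespace BlockDecomposition

variable {G : Type} [Group G] {A B C : Type} [AddCommGroup A] [AddCommGroup B] [AddCommGroup C]
  (d : BlockDecomposition A B C)

lemma shift_add (c₁ c₂ : C) (a : A) :
    d.blockShift (c₁ + c₂) = d.blockShift c₁ + d.blockShift c₂ ∧
      d.innerShift (c₁ + c₂) a = d.innerShift c₁ a + d.innerShift c₂ (a + d.blockShift c₁) := by
  have h := d.equiv_add a 0 (c₁ + c₂)
  rw [← add_assoc, d.equiv_add, d.equiv_add, d.equiv.apply_eq_iff_eq, Prod.mk.injEq] at h
  constructor
  · simpa only [add_assoc, add_right_inj] using h.1.symm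
  · simpa only [zero_add, add_assoc] using h.2.symm

lemma blockShift_add (c₁ c₂ : C) :
    d.blockShift (c₁ + c₂) = d.blockShift c₁ + d.blockShift c₂ :=
  (d.shift_add c₁ c₂ 0).1

lemma innerShift_add (c₁ c₂ : C) (a : A) :
    d.innerShift (c₁ + c₂) a = d.innerShift c₁ a + d.innerShift c₂ (a + d.blockShift c₁) :=
  (d.shift_add c₁ c₂ a).2

lemma eq_of_shift_eq {c₁ c₂ : C} (hT : d.blockShift c₁ = d.blockShift c₂)
    (hD : d.innerShift c₁ 0 = d.innerShift c₂ 0) : c₁ = c₂ := by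
  have h₁ := d.equiv_add 0 0 c₁
  have h₂ := d.equiv_add 0 0 c₂
  rw [hT, hD, ← h₂] at h₁
  exact add_left_cancel h₁

variable (G) in
def wrEmbeddingFun (f : C → G) (c : C) : Wr (Wr G B) A :=
  Wr.mk (fun a => Wr.mk (fun b => f (d.equiv (a, b))) (d.innerShift c a)) (d.blockShift c)

lemma wrEmbeddingFun_mul (f₁ f₂ : C → G) (c₁ c₂ : C) :
    d.wrEmbeddingFun G f₁ c₁ * d.wrEmbeddingFun G f₂ c₂ =
      d.wrEmbeddingFun G (fun y => f₁ y * f₂ (y + c₁)) (c₁ + c₂) := by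
  simp only [wrEmbeddingFun, Wr.mk_mul, d.equiv_add, d.blockShift_add, d.innerShift_add]

variable (G) in
def wrEmbedding : Wr G C →* Wr (Wr G B) A :=
  MonoidHom.mk' (fun x => d.wrEmbeddingFun G x.left x.right.toAdd) fun x y =>
    (d.wrEmbeddingFun_mul x.left y.left x.right.toAdd y.right.toAdd).symm

lemma wrEmbedding_injective : Function.Injective (d.wrEmbedding G) := by
  intro x y hxy
  obtain ⟨hf, hc⟩ := Wr.mk_inj.1 hxy
  simp only [funext_iff, Wr.mk_inj] at hf
  refine SemidirectProduct.ext (funext fun z => ?_) (d.eq_of_shift_eq hc (hf 0).2)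
  simpa using (hf (d.equiv.symm z).1).1 (d.equiv.symm z).2

lemma exists_injective_wr (d : BlockDecomposition A B C) {φ : Wr G A →* G}
    (hφ : Function.Injective φ) {ψ : Wr G B →* G} (hψ : Function.Injective ψ) :
    ∃ χ : Wr G C →* G, Function.Injective χ :=
  ⟨φ.comp ((Wr.map ψ A).comp (d.wrEmbedding G)),
    hφ.comp ((Wr.map_injective hψ).comp d.wrEmbedding_injective)⟩

end BlockDecomposition

namespace ZMod

lemma natCast_mul_mod (p m x : ℕ) :
    (p : ZMod (p * m)) * ((x % m : ℕ) : ZMod (p * m)) = p * x := by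
  exact_mod_cast (by rw [← Nat.mul_mod_mul_left, ZMod.natCast_mod] :
    ((p * (x % m) : ℕ) : ZMod (p * m)) = ((p * x : ℕ) : ZMod (p * m)))

variable (p m : ℕ) [NeZero p] [NeZero m]

def ofDigitPair (x : ZMod p × ZMod m) : ZMod (p * m) := x.1.val + p * x.2.val

lemma ofDigitPair_surjective : Function.Surjective (ofDigitPair p m) := fun x =>
  ⟨((x.val : ZMod p), ((x.val / p : ℕ) : ZMod m)), by
    simp only [ofDigitPair, ZMod.val_natCast, natCast_mul_mod]
    exact_mod_cast (congrArg (Nat.cast : ℕ → ZMod (p * m)) (Nat.mod_add_div x.val p)).trans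
      (ZMod.natCast_zmod_val x)⟩

lemma ofDigitPair_bijective : Function.Bijective (ofDigitPair p m) :=
  (Fintype.bijective_iff_surjective_and_card _).2
    ⟨ofDigitPair_surjective p m, by simp only [Fintype.card_prod, ZMod.card]⟩

lemma ofDigitPair_add (a : ZMod p) (b : ZMod m) (c : ZMod (p * m)) :
    ofDigitPair p m (a, b) + c =
      ofDigitPair p m (a + (c.val : ZMod p), b + (((a.val + c.val) / p : ℕ) : ZMod m)) := by
  simp only [ofDigitPair, ZMod.val_add, ZMod.val_natCast, Nat.add_mod_mod, natCast_mul_mod]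
  have h := congrArg (Nat.cast : ℕ → ZMod (p * m)) (Nat.mod_add_div (a.val + c.val) p)
  push_cast at h ⊢
  linear_combination -h - ZMod.natCast_zmod_val c

noncomputable def blockDecomposition : BlockDecomposition (ZMod p) (ZMod m) (ZMod (p * m)) where
  equiv := Equiv.ofBijective _ (ofDigitPair_bijective p m)
  blockShift c := c.val
  innerShift c a := ((a.val + c.val) / p : ℕ)
  equiv_add := ofDigitPair_add p m

end ZMod

/-- If `p ≥ 2` and `G ≀ (ℤ/p)` embeds into `G`, then `G ≀ (ℤ/pⁿ)` embeds into `G`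
for every `n ≥ 1`. -/
theorem stmt_13 (p : ℕ) (hp : 2 ≤ p) (G : Type) [Group G]
    (h : ∃ φ₁ : Wr G (ZMod p) →* G, Function.Injective φ₁) :
    ∀ n : ℕ, 1 ≤ n → ∃ φ : Wr G (ZMod (p ^ n)) →* G, Function.Injective φ := by
  obtain ⟨φ₁, hφ₁⟩ := h
  have : NeZero p := ⟨by omega⟩
  intro n hn
  induction n, hn using Nat.le_induction with
  | base => rw [pow_one]; exact ⟨φ₁, hφ₁⟩
  | succ k _ ih =>
    obtain ⟨ψ, hψ⟩ := ih
    rw [pow_succ']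
    exact (ZMod.blockDecomposition p (p ^ k)).exists_injective_wr hφ₁ hψ
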